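/- arXiv:2407.02412 — 3 statements merged into one kernel-verified Lean document; each statement's English description precedes it below -/
import Mathlib

section
/- For every integer k ≥ 4, there exists a finite simple graph Bot together with a vertex b of Bot such that: (1) for every k-leaf root T of Bot, m_T(b) ≤ k−1; and (2) there exists a k-leaf root T of Bot with m_T(b) = k−1. -/
open SimpleGraph

/-- A vertex of a graph is a leaf if it has exactly one neighbor. -/
def IsLeafVert {W : Type} (T : SimpleGraph W) (w : W) : Prop := ∃! u, T.Adj w u

/-- `T` (a finite tree on vertex type `W`) together with the injection `f` of the
vertices of `G` onto the leaves of `T` is a `k`-leaf root of `G`:  the leaves of `T`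
are exactly the image of `f`, and two distinct vertices of `G` are adjacent iff
their distance in `T` is at most `k`. -/
def IsLeafRoot {V W : Type} (G : SimpleGraph V) (k : ℕ)
    (T : SimpleGraph W) (f : V → W) : Prop :=
  Finite W ∧ T.IsTree ∧ Function.Injective f ∧
    (∀ w : W, (∃ v, f v = w) ↔ IsLeafVert T w) ∧
    (∀ u v : V, u ≠ v → (G.Adj u v ↔ T.dist (f u) (f v) ≤ k))

/-- `G` is a `k`-leaf power: it admits a `k`-leaf root. -/
def IsKLeafPower {V : Type} (G : SimpleGraph V) (k : ℕ) : Prop :=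
  ∃ (W : Type) (T : SimpleGraph W) (f : V → W), IsLeafRoot G k T f

/-- `m_T(v)`: the minimum over all `u ≠ v` of the distance in the leaf root `T`
between the leaves corresponding to `u` and `v`. -/
noncomputable def mval {V W : Type} (T : SimpleGraph W) (f : V → W) (v : V) : ℕ :=
  sInf {d | ∃ u, u ≠ v ∧ T.dist (f u) (f v) = d}

/-- A vertex has degree at least three. -/
def HasDegreeGEThree {W : Type} (T : SimpleGraph W) (w : W) : Prop :=
  ∃ a b c : W, a ≠ b ∧ a ≠ c ∧ b ≠ c ∧ T.Adj w a ∧ T.Adj w b ∧ T.Adj w c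

/-- A spine of a tree: a path containing every vertex of degree at least 3.  A tree
having a spine is exactly a caterpillar subdivision. -/
def IsSpine {W : Type} (T : SimpleGraph W) {a b : W} (p : T.Walk a b) : Prop :=
  p.IsPath ∧ ∀ w : W, HasDegreeGEThree T w → w ∈ p.support

/-- A linear `k`-leaf root: a `k`-leaf root whose tree is a caterpillar subdivision. -/
def IsLinearLeafRoot {V W : Type} (G : SimpleGraph V) (k : ℕ)
    (T : SimpleGraph W) (f : V → W) : Prop :=
  IsLeafRoot G k T f ∧ ∃ (a b : W) (p : T.Walk a b), IsSpine T p

/-- `G` is a linear `k`-leaf power: it admits a linear `k`-leaf root. -/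
def IsLinearKLeafPower {V : Type} (G : SimpleGraph V) (k : ℕ) : Prop :=
  ∃ (W : Type) (T : SimpleGraph W) (f : V → W), IsLinearLeafRoot G k T f

/-- A cycle of length `n` in `G`, given as an injective map from `ZMod n` with
consecutive images adjacent. -/
def IsCycleIn {V : Type} (G : SimpleGraph V) (n : ℕ) (f : ZMod n → V) : Prop :=
  Function.Injective f ∧ ∀ i : ZMod n, G.Adj (f i) (f (i + 1))

/-- `G` is chordal: every cycle of length at least 4 has a chord. -/
def Chordal {V : Type} (G : SimpleGraph V) : Prop :=
  ∀ n : ℕ, 4 ≤ n → ∀ f : ZMod n → V, IsCycleIn G n f →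
    ∃ i j : ZMod n, j ≠ i ∧ j ≠ i + 1 ∧ j ≠ i - 1 ∧ G.Adj (f i) (f j)

/-- `G` is strongly chordal: chordal, and every even cycle of length at least 6 has
an odd chord (a chord joining two vertices an odd distance apart along the cycle). -/
def StronglyChordal {V : Type} (G : SimpleGraph V) : Prop :=
  Chordal G ∧ ∀ n : ℕ, 6 ≤ n → Even n → ∀ f : ZMod n → V, IsCycleIn G n f →
    ∃ i j : ZMod n, Odd ((j - i).val) ∧ j ≠ i + 1 ∧ j ≠ i - 1 ∧ G.Adj (f i) (f j)

/-!
Take `Bot` to be the diamond `K₄ - w₁w₂` and `b`, `u` its two vertices of degree three (as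
vertices of `Fin 4`: `b, u, w₁, w₂ = 0, 1, 2, 3`). In any tree the four-point condition gives
`d(b,u) + d(w₁,w₂) ≤ max (d(b,w₁) + d(u,w₂)) (d(b,w₂) + d(u,w₁)) ≤ 2k`, while `d(w₁,w₂) ≥ k + 1`
since `w₁w₂` is a non-edge; hence `m_T(b) ≤ d(b,u) ≤ k - 1`.

For sharpness, the root is cut out of the comb on `ℕ × ℕ` (spine `ℕ × {0}`, a tooth `{i} × ℕ`
at every `i`), where distances are explicit: the spine from `w₁ = (0,0)` to `w₂ = (k+1,0)`, the
leaf `u = (2,1)`, and the tooth at `k/2 + 1` up to `b = (k/2 + 1, k - k/2 - 1)`.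
-/

namespace SimpleGraph

variable {V : Type*} {G : SimpleGraph V}

theorem Walk.IsPath.append_of_support_inter {u v w : V} {p : G.Walk u v} {q : G.Walk v w}
    (hp : p.IsPath) (hq : q.IsPath) (hpq : ∀ x ∈ p.support, x ∈ q.support → x = v) :
    (p.append q).IsPath := by
  have hq' := hq.support_nodup
  rw [← q.cons_tail_support, List.nodup_cons] at hq'
  rw [Walk.isPath_def, Walk.support_append, List.nodup_append]
  refine ⟨hp.support_nodup, hq'.2, fun x hx y hy hxy => ?_⟩
  subst hxy
  exact hq'.1 (hpq x hx (List.mem_of_mem_tail hy) ▸ hy)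

theorem IsTree.length_eq_dist {u v : V} (hG : G.IsTree) {p : G.Walk u v} (hp : p.IsPath) :
    p.length = G.dist u v := by
  obtain ⟨q, hq, hlen⟩ := hG.connected.exists_path_of_dist u v
  have : p = q := congrArg Subtype.val ((hG.isAcyclic.subsingleton_path u v).elim ⟨p, hp⟩ ⟨q, hq⟩)
  rw [this, hlen]

theorem IsTree.dist_add_dist_of_mem_support {u v m : V} (hG : G.IsTree) {p : G.Walk u v}
    (hp : p.IsPath) (hm : m ∈ p.support) : G.dist u m + G.dist m v = G.dist u v := by
  classical
  rw [← hG.length_eq_dist (hp.takeUntil hm), ← hG.length_eq_dist (hp.dropUntil hm),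
    ← hG.length_eq_dist hp, ← Walk.length_append, p.take_spec hm]

theorem IsTree.dist_add_dist_of_forall_dist_le {a x c : V} (hG : G.IsTree) {p : G.Walk x c}
    (hp : p.IsPath) (hx : ∀ y ∈ p.support, G.dist a x ≤ G.dist a y) :
    G.dist a x + G.dist x c = G.dist a c := by
  obtain ⟨q, hq, hlen⟩ := hG.connected.exists_path_of_dist a x
  have hqp : (q.append p).IsPath := by
    refine hq.append_of_support_inter hp fun y hyq hyp => ?_
    have := hG.dist_add_dist_of_mem_support hq hyq
    have := hx y hyp
    exact (hG.connected y x).dist_eq_zero_iff.mp (by omega)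
  rw [← hG.length_eq_dist hqp, Walk.length_append, hlen, hG.length_eq_dist hp]

theorem IsTree.exists_median (hG : G.IsTree) (a : V) {b c : V} {p : G.Walk b c}
    (hp : p.IsPath) : ∃ m ∈ p.support, G.dist a m + G.dist m b = G.dist a b ∧
      G.dist a m + G.dist m c = G.dist a c := by
  classical
  obtain ⟨m, hm, hmin⟩ := p.support.toFinset.exists_min_image (G.dist a) ⟨b, by simp⟩
  rw [List.mem_toFinset] at hm
  have hmin' : ∀ y ∈ p.support, G.dist a m ≤ G.dist a y := fun y hy => hmin y (by simpa using hy)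
  refine ⟨m, hm, ?_, ?_⟩
  · refine hG.dist_add_dist_of_forall_dist_le (hp.takeUntil hm).reverse fun y hy => hmin' y ?_
    exact p.support_takeUntil_subset_support hm (by simpa using hy)
  · exact hG.dist_add_dist_of_forall_dist_le (hp.dropUntil hm) fun y hy =>
      hmin' y (p.support_dropUntil_subset_support hm hy)

theorem IsTree.dist_add_dist_or_dist_add_dist (hG : G.IsTree) {r s m m' : V} {p : G.Walk r s}
    (hp : p.IsPath) (hm : m ∈ p.support) (hm' : m' ∈ p.support) :
    G.dist r m + G.dist m m' = G.dist r m' ∨ G.dist r m' + G.dist m' m = G.dist r m := by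
  classical
  have hrs := hG.dist_add_dist_of_mem_support hp hm
  rw [← p.take_spec hm', Walk.mem_support_append_iff] at hm
  rcases hm with hm | hm
  · exact .inl (hG.dist_add_dist_of_mem_support (hp.takeUntil hm') hm)
  · have := hG.dist_add_dist_of_mem_support (hp.dropUntil hm') hm
    have := hG.dist_add_dist_of_mem_support hp hm'
    exact .inr (by omega)

theorem IsTree.dist_add_dist_le_max (hG : G.IsTree) (p q r s : V) :
    G.dist p q + G.dist r s ≤ max (G.dist p r + G.dist q s) (G.dist p s + G.dist q r) := by
  obtain ⟨P, hP, -⟩ := hG.connected.exists_path_of_dist r s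
  obtain ⟨m, hm, hmr, hms⟩ := hG.exists_median p hP
  obtain ⟨m', hm', hm'r, hm's⟩ := hG.exists_median q hP
  have hrs := hG.dist_add_dist_of_mem_support hP hm
  have hrs' := hG.dist_add_dist_of_mem_support hP hm'
  have hpq : G.dist p q ≤ G.dist p m + G.dist m m' + G.dist m' q :=
    (hG.connected.dist_triangle).trans (add_le_add_left hG.connected.dist_triangle _)
  have := G.dist_comm (u := m) (v := r)
  have := G.dist_comm (u := m') (v := r)
  have := G.dist_comm (u := m') (v := q)
  have := G.dist_comm (u := m') (v := m)
  rcases hG.dist_add_dist_or_dist_add_dist hP hm hm' with h | h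
  · exact le_max_of_le_right (by omega)
  · exact le_max_of_le_left (by omega)

theorem isAcyclic_of_unique_lower_adj (h : V → ℕ) (hne : ∀ u v, G.Adj u v → h u ≠ h v)
    (huniq : ∀ u v w, G.Adj u v → G.Adj u w → h v < h u → h w < h u → v = w) :
    G.IsAcyclic := by
  classical
  intro v c hc
  obtain ⟨u, hu, hmax⟩ := c.support.toFinset.exists_max_image h ⟨v, by simp⟩
  rw [List.mem_toFinset] at hu
  set c' := c.rotate u hu
  have hc' : c'.IsCycle := hc.rotate hu
  have hlt : ∀ {x}, G.Adj u x → x ∈ c'.support → h x < h u := fun hx hmem =>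
    lt_of_le_of_ne (hmax _ (by simpa [c'] using hmem)) (hne _ _ hx).symm
  have hnil : ¬ c'.Nil := hc'.not_nil
  exact hc'.snd_ne_penultimate <| huniq u _ _ (c'.adj_snd hnil) (c'.adj_penultimate hnil).symm
    (hlt (c'.adj_snd hnil) (c'.getVert_mem_support _))
    (hlt (c'.adj_penultimate hnil).symm (c'.getVert_mem_support _))

variable (D : V → V → ℕ)

theorem le_length_of_forall_adj (hD : ∀ v, D v v = 0)
    (hadj : ∀ u u' v, G.Adj u u' → D u v ≤ D u' v + 1) {u v : V} (p : G.Walk u v) :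
    D u v ≤ p.length := by
  induction p with
  | nil => simp [hD]
  | cons h _ ih => grind [Walk.length_cons]

theorem exists_walk_length_le_of_forall_ne
    (hdesc : ∀ u v, u ≠ v → ∃ u', G.Adj u u' ∧ D u' v < D u v) (u v : V) :
    ∃ p : G.Walk u v, p.length ≤ D u v := by
  induction hn : D u v using Nat.strong_induction_on generalizing u with
  | _ n ih =>
    by_cases huv : u = v
    · subst huv; exact ⟨.nil, by simp⟩
    obtain ⟨u', hadj, hlt⟩ := hdesc u v huv
    obtain ⟨p, hp⟩ := ih _ (hn ▸ hlt) u' rfl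
    exact ⟨.cons hadj p, by simp; omega⟩

theorem dist_eq_of_forall_adj_of_forall_ne (hD : ∀ v, D v v = 0)
    (hadj : ∀ u u' v, G.Adj u u' → D u v ≤ D u' v + 1)
    (hdesc : ∀ u v, u ≠ v → ∃ u', G.Adj u u' ∧ D u' v < D u v) (u v : V) :
    G.dist u v = D u v := by
  obtain ⟨p, hp⟩ := exists_walk_length_le_of_forall_ne D hdesc u v
  obtain ⟨q, hq⟩ := p.reachable.exists_walk_length_eq_dist
  exact le_antisymm ((dist_le p).trans hp) (hq ▸ le_length_of_forall_adj D hD hadj q)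

end SimpleGraph

namespace IsLeafRoot

variable {V W : Type} {G : SimpleGraph V} {k : ℕ} {T : SimpleGraph W} {f : V → W}

theorem dist_le_of_adj (h : IsLeafRoot G k T f) {u v : V} (huv : G.Adj u v) :
    T.dist (f u) (f v) ≤ k :=
  (h.2.2.2.2 u v huv.ne).mp huv

theorem lt_dist_of_not_adj (h : IsLeafRoot G k T f) {u v : V} (hne : u ≠ v)
    (huv : ¬ G.Adj u v) : k < T.dist (f u) (f v) :=
  lt_of_not_ge fun hle => huv ((h.2.2.2.2 u v hne).mpr hle)

theorem dist_le_sub_one_of_adj_of_not_adj (h : IsLeafRoot G k T f) {a b c d : V}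
    (hac : G.Adj a c) (had : G.Adj a d) (hbc : G.Adj b c) (hbd : G.Adj b d) (hcd : c ≠ d)
    (hncd : ¬ G.Adj c d) :
    T.dist (f a) (f b) ≤ k - 1 := by
  have := h.2.1.dist_add_dist_le_max (f a) (f b) (f c) (f d)
  have := h.dist_le_of_adj hac
  have := h.dist_le_of_adj had
  have := h.dist_le_of_adj hbc
  have := h.dist_le_of_adj hbd
  have := h.lt_dist_of_not_adj hcd hncd
  omega

end IsLeafRoot

theorem mval_le_dist {V W : Type} {T : SimpleGraph W} {f : V → W} {u v : V} (huv : u ≠ v) :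
    mval T f v ≤ T.dist (f u) (f v) :=
  Nat.sInf_le ⟨u, huv, rfl⟩

theorem mval_eq_of_forall_le {V W : Type} {T : SimpleGraph W} {f : V → W} {u v : V} {n : ℕ}
    (huv : u ≠ v) (hu : T.dist (f u) (f v) = n)
    (hle : ∀ u', u' ≠ v → n ≤ T.dist (f u') (f v)) : mval T f v = n :=
  le_antisymm (hu ▸ mval_le_dist huv)
    (le_csInf ⟨_, u, huv, hu⟩ fun _ ⟨u', hu', hd⟩ => hd ▸ hle u' hu')

def diamond : SimpleGraph (Fin 4) := (⊤ : SimpleGraph (Fin 4)).deleteEdges {s(2, 3)}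

theorem mval_le_of_isLeafRoot_diamond {W : Type} {k : ℕ} {T : SimpleGraph W} {f : Fin 4 → W}
    (h : IsLeafRoot diamond k T f) : mval T f 0 ≤ k - 1 :=
  (mval_le_dist (u := 1) (by decide)).trans <|
    h.dist_le_sub_one_of_adj_of_not_adj (c := 2) (d := 3) (by simp [diamond])
      (by simp [diamond]) (by simp [diamond]) (by simp [diamond]) (by decide) (by simp [diamond])

def comb : SimpleGraph (ℕ × ℕ) where
  Adj p q := (p.2 = 0 ∧ q.2 = 0 ∧ (p.1 + 1 = q.1 ∨ q.1 + 1 = p.1)) ∨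
    (p.1 = q.1 ∧ (p.2 + 1 = q.2 ∨ q.2 + 1 = p.2))
  symm := ⟨fun _ _ h => by omega⟩
  loopless := ⟨fun _ h => by omega⟩

def combDist (p q : ℕ × ℕ) : ℕ :=
  if p.1 = q.1 then Nat.dist p.2 q.2 else Nat.dist p.1 q.1 + p.2 + q.2

theorem comb_adj {i j i' j' : ℕ} : comb.Adj (i, j) (i', j') ↔
    j = 0 ∧ j' = 0 ∧ (i + 1 = i' ∨ i' + 1 = i) ∨ i = i' ∧ (j + 1 = j' ∨ j' + 1 = j) :=
  Iff.rfl

theorem comb_isAcyclic : comb.IsAcyclic :=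
  isAcyclic_of_unique_lower_adj (fun p => p.1 + p.2)
    (fun ⟨_, _⟩ ⟨_, _⟩ h => by rw [comb_adj] at h; dsimp only; omega)
    fun ⟨_, _⟩ ⟨_, _⟩ ⟨_, _⟩ hv hw _ _ => by rw [comb_adj] at hv hw; dsimp only at *; ext <;> omega

theorem combDist_self (p : ℕ × ℕ) : combDist p p = 0 := by simp [combDist]

theorem combDist_le_of_adj {p p' : ℕ × ℕ} (h : comb.Adj p p') (q : ℕ × ℕ) :
    combDist p q ≤ combDist p' q + 1 := by
  obtain ⟨⟨i, j⟩, ⟨i', j'⟩⟩ := (p, p')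
  rw [comb_adj] at h; simp only [combDist, Nat.dist]; split_ifs <;> omega

structure IsCombConvex (S : Set (ℕ × ℕ)) : Prop where
  mem_of_succ_mem : ∀ {i j : ℕ}, (i, j + 1) ∈ S → (i, j) ∈ S
  spine_mem_of_mem_of_mem : ∀ {i l i' : ℕ}, (i, 0) ∈ S → (i', 0) ∈ S → i ≤ l → l ≤ i' → (l, 0) ∈ S

namespace IsCombConvex

variable {S : Set (ℕ × ℕ)}

theorem mem_of_le (hS : IsCombConvex S) {i j j' : ℕ} (h : (i, j) ∈ S) (hj : j' ≤ j) :
    (i, j') ∈ S := by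
  induction j with
  | zero => rwa [Nat.le_zero.mp hj]
  | succ j ih =>
    rcases hj.eq_or_lt with rfl | hlt
    · exact h
    · exact ih (hS.mem_of_succ_mem h) (by omega)

theorem exists_adj_combDist_lt (hS : IsCombConvex S) {p q : S} (hpq : p ≠ q) :
    ∃ p' : S, (comb.induce S).Adj p p' ∧ combDist p' q < combDist p q := by
  obtain ⟨⟨i, j⟩, hp⟩ := p
  obtain ⟨⟨i', j'⟩, hq⟩ := q
  simp only [ne_eq, Subtype.mk.injEq, Prod.mk.injEq, not_and_or] at hpq
  have hq0 : (i', 0) ∈ S := hS.mem_of_le hq (Nat.zero_le _)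
  -- step down the tooth unless `q` lies higher up the same tooth; on the spine, step towards `q`
  by_cases hdown : j ≠ 0 ∧ (i = i' → j' < j)
  · refine ⟨⟨(i, j - 1), hS.mem_of_le hp (Nat.sub_le _ _)⟩, ?_, ?_⟩
    · exact comb_adj.mpr (by omega)
    · simp only [combDist, Nat.dist]; split_ifs <;> omega
  by_cases hcol : i = i'
  · subst hcol
    refine ⟨⟨(i, j + 1), hS.mem_of_le hq (by omega)⟩, ?_, ?_⟩
    · exact comb_adj.mpr (by omega)
    · simp only [combDist, Nat.dist]; split_ifs <;> omega
  have hj : j = 0 := by omega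
  subst hj
  rcases Nat.lt_or_gt_of_ne hcol with hlt | hgt
  · refine ⟨⟨(i + 1, 0), hS.spine_mem_of_mem_of_mem hp hq0 (by omega) hlt⟩, ?_, ?_⟩
    · exact comb_adj.mpr (by omega)
    · simp only [combDist, Nat.dist]; split_ifs <;> omega
  · refine ⟨⟨(i - 1, 0), hS.spine_mem_of_mem_of_mem hq0 hp (by omega) (by omega)⟩, ?_, ?_⟩
    · exact comb_adj.mpr (by omega)
    · simp only [combDist, Nat.dist]; split_ifs <;> omega

theorem dist_induce (hS : IsCombConvex S) (p q : S) :
    (comb.induce S).dist p q = combDist p q :=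
  dist_eq_of_forall_adj_of_forall_ne (G := comb.induce S) (fun p q : S => combDist p q)
    (fun _ => combDist_self _) (fun _ _ _ h => combDist_le_of_adj h _)
    (fun _ _ => hS.exists_adj_combDist_lt) p q

theorem isTree_induce (hS : IsCombConvex S) (hne : S.Nonempty) : (comb.induce S).IsTree := by
  have := hne.to_subtype
  refine ⟨⟨fun p q => ?_⟩, comb_isAcyclic.induce S⟩
  obtain ⟨w, -⟩ := exists_walk_length_le_of_forall_ne (G := comb.induce S)
    (fun p q : S => combDist p q) (fun _ _ => hS.exists_adj_combDist_lt) p q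
  exact w.reachable

end IsCombConvex

namespace DiamondRoot

variable (k : ℕ)

def verts : Set (ℕ × ℕ) :=
  {p | p.2 = 0 ∧ p.1 ≤ k + 1 ∨ p.1 = 2 ∧ p.2 = 1 ∨ p.1 = k / 2 + 1 ∧ p.2 ≤ k - k / 2 - 1}

def leafPos : Fin 4 → ℕ × ℕ := ![(k / 2 + 1, k - k / 2 - 1), (2, 1), (0, 0), (k + 1, 0)]

theorem mk_mem_verts {i j : ℕ} :
    (i, j) ∈ verts k ↔ j = 0 ∧ i ≤ k + 1 ∨ i = 2 ∧ j = 1 ∨ i = k / 2 + 1 ∧ j ≤ k - k / 2 - 1 :=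
  Iff.rfl

theorem isCombConvex_verts (hk : 1 ≤ k) : IsCombConvex (verts k) where
  mem_of_succ_mem h := by rw [mk_mem_verts] at h ⊢; omega
  spine_mem_of_mem_of_mem h h' _ _ := by rw [mk_mem_verts] at h h' ⊢; omega

theorem finite_verts : (verts k).Finite :=
  ((Set.finite_Iic (k + 2)).prod (Set.finite_Iic (k + 2))).subset fun ⟨i, j⟩ hp => by
    rw [mk_mem_verts] at hp; show i ≤ k + 2 ∧ j ≤ k + 2; omega

theorem leafPos_mem (v : Fin 4) : leafPos k v ∈ verts k := by
  fin_cases v <;> simp [leafPos, mk_mem_verts]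

theorem isLeafVert_of_forall_adj {i j : ℕ} (hw : (i, j) ∈ verts k) (a b : ℕ)
    (hn : (a, b) ∈ verts k) (hadj : comb.Adj (i, j) (a, b))
    (huniq : ∀ a' b', (a', b') ∈ verts k → comb.Adj (i, j) (a', b') → a' = a ∧ b' = b) :
    IsLeafVert (comb.induce (verts k)) ⟨(i, j), hw⟩ :=
  ⟨⟨(a, b), hn⟩, hadj, fun ⟨⟨a', b'⟩, hu⟩ hadj' => by
    obtain ⟨rfl, rfl⟩ := huniq a' b' hu hadj'; rfl⟩

theorem not_isLeafVert_of_adj_of_adj {i j : ℕ} (hw : (i, j) ∈ verts k) (a b : ℕ × ℕ)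
    (ha : a ∈ verts k) (hb : b ∈ verts k) (hab : a ≠ b) (hwa : comb.Adj (i, j) a)
    (hwb : comb.Adj (i, j) b) : ¬ IsLeafVert (comb.induce (verts k)) ⟨(i, j), hw⟩ :=
  fun ⟨_, _, huniq⟩ =>
    hab (congrArg Subtype.val ((huniq ⟨a, ha⟩ hwa).trans (huniq ⟨b, hb⟩ hwb).symm))

theorem isLeafVert_mk_iff (hk : 4 ≤ k) {i j : ℕ} (hw : (i, j) ∈ verts k) :
    IsLeafVert (comb.induce (verts k)) ⟨(i, j), hw⟩ ↔
      i = k / 2 + 1 ∧ j = k - k / 2 - 1 ∨ i = 2 ∧ j = 1 ∨ i = 0 ∧ j = 0 ∨ i = k + 1 ∧ j = 0 := by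
  have hw' := (mk_mem_verts k).mp hw
  refine ⟨fun h => ?_, fun h => ?_⟩
  · by_contra hne
    by_cases hj : j = 0
    · exact not_isLeafVert_of_adj_of_adj k hw (i - 1, 0) (i + 1, 0)
        ((mk_mem_verts k).mpr (by omega)) ((mk_mem_verts k).mpr (by omega)) (by simp)
        (comb_adj.mpr (by omega)) (comb_adj.mpr (by omega)) h
    · exact not_isLeafVert_of_adj_of_adj k hw (i, j - 1) (i, j + 1)
        ((mk_mem_verts k).mpr (by omega)) ((mk_mem_verts k).mpr (by omega)) (by simp)
        (comb_adj.mpr (by omega)) (comb_adj.mpr (by omega)) h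
  · rcases h with ⟨rfl, rfl⟩ | ⟨rfl, rfl⟩ | ⟨rfl, rfl⟩ | ⟨rfl, rfl⟩
    · refine isLeafVert_of_forall_adj k hw (k / 2 + 1) (k - k / 2 - 2)
        ((mk_mem_verts k).mpr (by omega)) (comb_adj.mpr (by omega)) fun a b hu hadj => ?_
      rw [mk_mem_verts] at hu; rw [comb_adj] at hadj; omega
    · refine isLeafVert_of_forall_adj k hw 2 0 ((mk_mem_verts k).mpr (by omega))
        (comb_adj.mpr (by omega)) fun a b hu hadj => ?_
      rw [mk_mem_verts] at hu; rw [comb_adj] at hadj; omega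
    · refine isLeafVert_of_forall_adj k hw 1 0 ((mk_mem_verts k).mpr (by omega))
        (comb_adj.mpr (by omega)) fun a b hu hadj => ?_
      rw [mk_mem_verts] at hu; rw [comb_adj] at hadj; omega
    · refine isLeafVert_of_forall_adj k hw k 0 ((mk_mem_verts k).mpr (by omega))
        (comb_adj.mpr (by omega)) fun a b hu hadj => ?_
      rw [mk_mem_verts] at hu; rw [comb_adj] at hadj; omega

def root (v : Fin 4) : verts k := ⟨leafPos k v, leafPos_mem k v⟩

theorem dist_root (hk : 4 ≤ k) (u v : Fin 4) :
    (comb.induce (verts k)).dist (root k u) (root k v) =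
      ![![0, k - 1, k, k - 1 + k % 2], ![k - 1, 0, 3, k], ![k, 3, 0, k + 1],
        ![k - 1 + k % 2, k, k + 1, 0]] u v := by
  rw [(isCombConvex_verts k (by omega)).dist_induce]
  have : k / 2 ≠ 1 := by omega
  have : k / 2 ≠ k := by omega
  have : k ≠ k / 2 := by omega
  have : k ≠ 1 := by omega
  fin_cases u <;> fin_cases v <;> simp [root, leafPos, combDist, Nat.dist, *] <;> omega

theorem isLeafRoot (hk : 4 ≤ k) :
    IsLeafRoot diamond k (comb.induce (verts k)) (root k) := by
  refine ⟨(finite_verts k).to_subtype,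
    (isCombConvex_verts k (by omega)).isTree_induce ⟨_, leafPos_mem k 0⟩, ?_, ?_, ?_⟩
  · intro u v h
    fin_cases u <;> fin_cases v <;> simp [root, leafPos] at h ⊢ <;> omega
  · rintro ⟨⟨i, j⟩, hw⟩
    rw [isLeafVert_mk_iff k hk]
    simp only [root, leafPos, Subtype.mk.injEq, Fin.exists_fin_succ, Fin.isValue,
      Matrix.cons_val_zero, Prod.mk.injEq, Matrix.cons_val_succ, Matrix.cons_val_fin_one,
      exists_const]
    omega
  · intro u v huv
    rw [dist_root k hk]
    fin_cases u <;> fin_cases v <;> simp [diamond] at huv ⊢ <;> omega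

theorem mval_root (hk : 4 ≤ k) : mval (comb.induce (verts k)) (root k) 0 = k - 1 := by
  refine mval_eq_of_forall_le (u := 1) (by decide) (by simp [dist_root k hk]) fun u hu => ?_
  fin_cases u <;> simp [dist_root k hk] at hu ⊢

end DiamondRoot

theorem bottom_gadget_exists (k : ℕ) (hk : 4 ≤ k) :
    ∃ (V : Type), Finite V ∧ ∃ (Bot : SimpleGraph V) (b : V),
      (∀ (W : Type) (T : SimpleGraph W) (f : V → W),
        IsLeafRoot Bot k T f → mval T f b ≤ k - 1) ∧
      (∃ (W : Type) (T : SimpleGraph W) (f : V → W),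
        IsLeafRoot Bot k T f ∧ mval T f b = k - 1) :=
  ⟨Fin 4, inferInstance, diamond, 0, fun _ _ _ => mval_le_of_isLeafRoot_diamond,
    _, _, _, DiamondRoot.isLeafRoot k hk, DiamondRoot.mval_root k hk⟩
end

section
/- Let T be a finite tree with distance function d, and let t, y, x1, x2, x3 be leaves of T. If d(t,x1) ≤ min{d(t,x2), d(t,x3)} and d(y,x1) > max{d(y,x2), d(y,x3)}, then d(t,x1) + d(x2,x3) < d(t,x2) + d(x1,x3) and d(t,x2) + d(x1,x3) = d(t,x3) + d(x1,x2). -/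
open SimpleGraph

section FourPointAux

variable {W : Type} {T : SimpleGraph W}

lemma dist_le_of_mem_support [DecidableEq W] {u v w : W} (p : T.Walk u v)
    (hw : w ∈ p.support) : T.dist u w ≤ p.length := by
  have h := p.take_spec hw
  have := congrArg SimpleGraph.Walk.length h
  rw [SimpleGraph.Walk.length_append] at this
  have h2 := SimpleGraph.dist_le (p.takeUntil w hw)
  omega

/-- In a tree, adjacent vertices have different distances to any vertex. -/
lemma tree_adj_dist_ne (hT : T.IsTree) (a b c : W) (hab : T.Adj a b) :
    T.dist c a ≠ T.dist c b := by
  classical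
  intro h
  obtain ⟨p, hp, hpl⟩ := hT.isConnected.exists_path_of_dist c a
  have hbns : b ∉ p.support := by
    intro hb
    have h1 := dist_le_of_mem_support p hb
    have h2 := p.take_spec hb
    have h3 := congrArg SimpleGraph.Walk.length h2
    rw [SimpleGraph.Walk.length_append] at h3
    have h4 := SimpleGraph.dist_le (p.takeUntil b hb)
    have h5 := SimpleGraph.dist_le (p.dropUntil b hb)
    have hba : T.dist b a = 1 := SimpleGraph.dist_eq_one_iff_adj.mpr hab.symm
    have htri := hT.isConnected.dist_triangle (u := c) (v := b) (w := a)
    rw [hba] at htri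
    have h6 : (p.dropUntil b hb).length = 0 := by omega
    exact hab.ne (SimpleGraph.Walk.eq_of_length_eq_zero h6).symm
  have hq1 : (SimpleGraph.Walk.cons hab.symm p.reverse).IsPath := by
    rw [SimpleGraph.Walk.cons_isPath_iff]
    exact ⟨hp.reverse, by rw [SimpleGraph.Walk.support_reverse, List.mem_reverse]; exact hbns⟩
  obtain ⟨q, hq, hql⟩ := hT.isConnected.exists_path_of_dist b c
  have huniq := hT.IsAcyclic.path_unique ⟨_, hq1⟩ ⟨q, hq⟩
  have hlen : (SimpleGraph.Walk.cons hab.symm p.reverse).length = q.length :=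
    congrArg (fun r : T.Path b c => r.val.length) huniq
  rw [SimpleGraph.Walk.length_cons, SimpleGraph.Walk.length_reverse] at hlen
  have hcomm : T.dist b c = T.dist c b := SimpleGraph.dist_comm
  omega

/-- Adjacent vertices' distances to c differ by exactly one. -/
lemma tree_adj_dist_cases (hT : T.IsTree) (a b c : W) (hab : T.Adj a b) :
    T.dist c b = T.dist c a + 1 ∨ T.dist c a = T.dist c b + 1 := by
  have h1 := hT.isConnected.dist_triangle (u := c) (v := a) (w := b)
  have h2 := hT.isConnected.dist_triangle (u := c) (v := b) (w := a)
  have h3 : T.dist a b = 1 := SimpleGraph.dist_eq_one_iff_adj.mpr hab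
  have h4 : T.dist b a = 1 := SimpleGraph.dist_eq_one_iff_adj.mpr hab.symm
  have h5 := tree_adj_dist_ne hT a b c hab
  omega

/-- Unique decreasing neighbor in a tree. -/
lemma tree_unique_down (hT : T.IsTree) (w z1 z2 c : W) (h1 : T.Adj w z1) (h2 : T.Adj w z2)
    (hd1 : T.dist c z1 + 1 = T.dist c w) (hd2 : T.dist c z2 + 1 = T.dist c w) :
    z1 = z2 := by
  classical
  have key : ∀ z : W, T.Adj w z → T.dist c z + 1 = T.dist c w →
      ∃ r : T.Walk w c, r.IsPath ∧ r.length = T.dist c w ∧ r.getVert 1 = z := by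
    intro z hz hdz
    obtain ⟨p, hp, hpl⟩ := hT.isConnected.exists_path_of_dist c z
    have hwns : w ∉ p.support := by
      intro hw
      have := dist_le_of_mem_support p hw
      omega
    refine ⟨SimpleGraph.Walk.cons hz p.reverse, ?_, ?_, ?_⟩
    · rw [SimpleGraph.Walk.cons_isPath_iff]
      exact ⟨hp.reverse, by rw [SimpleGraph.Walk.support_reverse, List.mem_reverse]; exact hwns⟩
    · rw [SimpleGraph.Walk.length_cons, SimpleGraph.Walk.length_reverse]; omega
    · rw [SimpleGraph.Walk.getVert_cons_succ, SimpleGraph.Walk.getVert_zero]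
  obtain ⟨r1, hr1, hl1, hh1⟩ := key z1 h1 hd1
  obtain ⟨r2, hr2, hl2, hh2⟩ := key z2 h2 hd2
  have heq : r1 = r2 := congrArg Subtype.val (hT.IsAcyclic.path_unique ⟨r1, hr1⟩ ⟨r2, hr2⟩)
  rw [← hh1, ← hh2, heq]

/-- If a geodesic from `a` to `b` starts by moving away from `c`, then
`b` is at distance `d(c,a) + d(a,b)` from `c`. -/
lemma tree_away (hT : T.IsTree) :
    ∀ (n : ℕ) (a a' b c : W), T.Adj a a' → T.dist a' b = n → T.dist a b = n + 1 →
      T.dist c a' = T.dist c a + 1 → T.dist c b = T.dist c a + (n + 1) := by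
  intro n
  induction n with
  | zero =>
    intro a a' b c _ h0 _ hup
    have : a' = b := (hT.isConnected.dist_eq_zero_iff).mp h0
    rw [← this, hup]
  | succ n ih =>
    intro a a' b c hadj hn1 hn2 hup
    obtain ⟨p, hp, hpl⟩ := hT.isConnected.exists_path_of_dist a' b
    rw [hn1] at hpl
    cases p with
    | nil => simp at hpl
    | cons h q =>
      rename_i x
      rw [SimpleGraph.Walk.length_cons] at hpl
      have hxb : T.dist x b = n := by
        have hle := SimpleGraph.dist_le q
        have htri := hT.isConnected.dist_triangle (u := a') (v := x) (w := b)
        have h1 : T.dist a' x = 1 := SimpleGraph.dist_eq_one_iff_adj.mpr h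
        omega
      rcases tree_adj_dist_cases hT a' x c h with hcx | hcx
      · -- still moving away; apply ih
        have := ih a' x b c h hxb (by omega) (by omega)
        omega
      · -- x moves back toward c: then a and x are both decreasing neighbors of a'
        have hax : a = x := by
          apply tree_unique_down hT a' a x c hadj.symm h (by omega) (by omega)
        subst hax
        omega

lemma tree_fp (hT : T.IsTree) :
    ∀ (n : ℕ) (a b c d : W), T.dist a b = n →
      T.dist a b + T.dist c d ≤ T.dist a c + T.dist b d ∨
      T.dist a b + T.dist c d ≤ T.dist a d + T.dist b c := by
  intro n
  induction n with
  | zero =>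
    intro a b c d h0
    have hab : a = b := (hT.isConnected.dist_eq_zero_iff).mp h0
    subst hab
    left
    have htri := hT.isConnected.dist_triangle (u := c) (v := a) (w := d)
    have hc1 : T.dist c a = T.dist a c := SimpleGraph.dist_comm
    have hc2 : T.dist a d = T.dist a d := rfl
    omega
  | succ n ih =>
    intro a b c d hn
    obtain ⟨p, hp, hpl⟩ := hT.isConnected.exists_path_of_dist a b
    rw [hn] at hpl
    cases p with
    | nil => simp at hpl
    | cons h q =>
      rename_i x
      rw [SimpleGraph.Walk.length_cons] at hpl
      have hxb : T.dist x b = n := by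
        have hle := SimpleGraph.dist_le q
        have htri := hT.isConnected.dist_triangle (u := a) (v := x) (w := b)
        have h1 : T.dist a x = 1 := SimpleGraph.dist_eq_one_iff_adj.mpr h
        omega
      have htcd := hT.isConnected.dist_triangle (u := c) (v := a) (w := d)
      have hcomm1 : T.dist c a = T.dist a c := SimpleGraph.dist_comm
      have hcomm2 : T.dist c b = T.dist b c := SimpleGraph.dist_comm
      have hcomm3 : T.dist d b = T.dist b d := SimpleGraph.dist_comm
      have hcomm4 : T.dist d a = T.dist a d := SimpleGraph.dist_comm
      rcases tree_adj_dist_cases hT a x c h with hcx | hcx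
      · -- moving away from c
        have hcb : T.dist c b = T.dist c a + (n + 1) := tree_away hT n a x b c h hxb hn hcx
        right; omega
      · rcases tree_adj_dist_cases hT a x d h with hdx | hdx
        · -- moving away from d
          have hdb : T.dist d b = T.dist d a + (n + 1) := tree_away hT n a x b d h hxb hn hdx
          left; omega
        · -- moving toward both c and d
          have hcomm5 : T.dist d x = T.dist x d := SimpleGraph.dist_comm
          have hcomm6 : T.dist c x = T.dist x c := SimpleGraph.dist_comm
          rcases ih x b c d hxb with h' | h'
          · left; omega
          · right; omega

end FourPointAux

theorem four_point_closer (W : Type) (hW : Finite W)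
    (T : SimpleGraph W) (hT : T.IsTree) (t y x1 x2 x3 : W)
    (ht : IsLeafVert T t) (hy : IsLeafVert T y) (hx1 : IsLeafVert T x1)
    (hx2 : IsLeafVert T x2) (hx3 : IsLeafVert T x3)
    (h1 : T.dist t x1 ≤ min (T.dist t x2) (T.dist t x3))
    (h2 : T.dist y x1 > max (T.dist y x2) (T.dist y x3)) :
    T.dist t x1 + T.dist x2 x3 < T.dist t x2 + T.dist x1 x3 ∧
    T.dist t x2 + T.dist x1 x3 = T.dist t x3 + T.dist x1 x2 := by
  have fp : ∀ a b c d : W,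
      T.dist a b + T.dist c d ≤ T.dist a c + T.dist b d ∨
      T.dist a b + T.dist c d ≤ T.dist a d + T.dist b c :=
    fun a b c d => tree_fp hT (T.dist a b) a b c d rfl
  have A1 := fp t x1 x2 x3
  have A2 := fp t x2 x1 x3
  have A3 := fp t x3 x1 x2
  have B1 := fp y x1 x2 x3
  have B2 := fp y x2 x1 x3
  have B3 := fp y x3 x1 x2
  have C1 := fp t y x2 x3
  have C2 := fp t x2 y x3
  have C3 := fp t x3 y x2
  have D1 := fp t y x1 x2
  have D2 := fp t x1 y x2
  have D3 := fp t x2 y x1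
  have E1 := fp t y x1 x3
  have E2 := fp t x1 y x3
  have E3 := fp t x3 y x1
  have c1 : T.dist x2 x1 = T.dist x1 x2 := SimpleGraph.dist_comm
  have c2 : T.dist x3 x1 = T.dist x1 x3 := SimpleGraph.dist_comm
  have c3 : T.dist x3 x2 = T.dist x2 x3 := SimpleGraph.dist_comm
  have c4 : T.dist y t = T.dist t y := SimpleGraph.dist_comm
  have c5 : T.dist x1 t = T.dist t x1 := SimpleGraph.dist_comm
  have c6 : T.dist x2 t = T.dist t x2 := SimpleGraph.dist_comm
  have c7 : T.dist x3 t = T.dist t x3 := SimpleGraph.dist_comm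
  have c8 : T.dist x1 y = T.dist y x1 := SimpleGraph.dist_comm
  have c9 : T.dist x2 y = T.dist y x2 := SimpleGraph.dist_comm
  have c10 : T.dist x3 y = T.dist y x3 := SimpleGraph.dist_comm
  rw [le_min_iff] at h1
  simp only [gt_iff_lt, max_lt_iff] at h2
  obtain ⟨h1a, h1b⟩ := h1
  obtain ⟨h2a, h2b⟩ := h2
  omega
end

section
/- Fix an odd integer k = 2q+1 ≥ 5 and let I_k be the odd interior gadget. Then there exists a k-leaf root R of I_k such that m_R(t) = k−1 and m_R(b) = 4. -/
open SimpleGraph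

/-- Vertices of the odd interior gadget for `k = 2q+1`: `t`, `b`,
`x i` for `i : Fin q` (representing `x_{i+1}`), and `y i` for `i : Fin (q-1)`
(representing `y_{i+2}`). -/
inductive IVert (q : ℕ) : Type where
  | t : IVert q
  | b : IVert q
  | x : Fin q → IVert q
  | y : Fin (q - 1) → IVert q

/-- The odd interior gadget `I_k` for odd `k = 2q+1 ≥ 5`: edges `t x_i` and `b x_i`
for all `1 ≤ i ≤ q`, `x_i x_j` for `i < j` (so `X` is a clique), `y_i x_j` for
`2 ≤ i ≤ j ≤ q`, and `b y_q`. -/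
def oddGadget (q : ℕ) : SimpleGraph (IVert q) :=
  SimpleGraph.fromRel (fun u v => match u, v with
    | .t, .x _ => True
    | .b, .x _ => True
    | .x i, .x j => i ≠ j
    | .y a, .x c => (a : ℕ) + 1 ≤ (c : ℕ)
    | .b, .y a => (a : ℕ) = q - 2
    | _, _ => False)

/-!
The root is a caterpillar: a spine `0, 1, …, 2q`, and for every vertex `v` of `I_k` a pendant
path (a leg) of length `len v` attached at the spine vertex `pos v` and ending in the leaf `v`;
`t` hangs from `0`, and `b` and `y_q` from `2q`. Two leaves of a caterpillar are at distance
`len u + |pos u - pos v| + len v`, so for the chosen legs every adjacency condition of `I_k`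
becomes a linear inequality, checked case by case. The leaf nearest to `t` is `x_1`, at distance
`2q`; the leaf nearest to `b` is `x_q`, whose leg of length `1` hangs next to `b`'s, at
distance `4`.
-/

namespace SimpleGraph

variable {V : Type}

def ofParent (p : V → V) (r : V) : SimpleGraph V :=
  fromRel fun u v => u ≠ r ∧ p u = v

theorem ofParent_adj {p : V → V} {r u v : V} :
    (ofParent p r).Adj u v ↔ u ≠ v ∧ (u ≠ r ∧ p u = v ∨ v ≠ r ∧ p v = u) := by
  simp [ofParent]

section Depth

variable {p : V → V} {r : V} {d : V → ℕ} (hd : ∀ v, v ≠ r → d (p v) + 1 = d v)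
include hd

theorem ofParent_adj_parent {v : V} (hv : v ≠ r) : (ofParent p r).Adj v (p v) := by
  refine ofParent_adj.2 ⟨fun h => ?_, .inl ⟨hv, rfl⟩⟩
  have := hd v hv
  rw [← h] at this
  omega

theorem ofParent_reachable_root (v : V) : (ofParent p r).Reachable v r := by
  induction h : d v using Nat.strong_induction_on generalizing v with
  | _ n ih =>
    by_cases hv : v = r
    · exact hv ▸ .refl v
    · have hlt : d (p v) < n := by rw [← h, ← hd v hv]; omega
      exact (ofParent_adj_parent hd hv).reachable.trans (ih _ hlt _ rfl)

theorem ofParent_connected : (ofParent p r).Connected :=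
  haveI : Nonempty V := ⟨r⟩
  ⟨fun u v => (ofParent_reachable_root hd u).trans (ofParent_reachable_root hd v).symm⟩

/-- `v ↦ s(v, p v)` is a bijection from the non-root vertices onto the edges. -/
theorem ofParent_card_edgeSet_add_one [Finite V] :
    Nat.card (ofParent p r).edgeSet + 1 = Nat.card V := by
  let e : {v // v ≠ r} → (ofParent p r).edgeSet := fun v =>
    ⟨s(v.1, p v.1), ofParent_adj_parent hd v.2⟩
  have he : Function.Bijective e := by
    constructor
    · rintro ⟨u, hu⟩ ⟨v, hv⟩ huv
      rcases Sym2.eq_iff.1 (congrArg Subtype.val huv) with ⟨h, -⟩ | ⟨huv, hvu⟩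
      · exact Subtype.ext h
      · have h1 := hd _ hu
        have h2 := hd _ hv
        simp only at huv hvu
        rw [hvu] at h1
        rw [← huv] at h2
        omega
    · rintro ⟨e', he'⟩
      induction e' using Sym2.ind with
      | _ a b =>
      rcases (ofParent_adj.1 he').2 with ⟨ha, hab⟩ | ⟨hb, hba⟩
      · exact ⟨⟨a, ha⟩, by simp [e, hab]⟩
      · exact ⟨⟨b, hb⟩, by simp [e, hba, Sym2.eq_swap]⟩
  rw [← Nat.card_eq_of_bijective e he, ← Finite.card_option,
    Nat.card_congr (by classical exact Equiv.optionSubtypeNe r)]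

theorem ofParent_isTree [Finite V] : (ofParent p r).IsTree :=
  isTree_iff_connected_and_card.2 ⟨ofParent_connected hd, ofParent_card_edgeSet_add_one hd⟩

theorem isLeafVert_ofParent_iff {w : V} (hw : w ≠ r) :
    IsLeafVert (ofParent p r) w ↔ ∀ u, u ≠ r → p u ≠ w := by
  constructor
  · rintro ⟨a, -, huniq⟩ u hu rfl
    have h1 := huniq _ (ofParent_adj_parent hd hw)
    have h2 := huniq _ (ofParent_adj_parent hd hu).symm
    have := hd _ hu
    have := hd _ hw
    have : d (p (p u)) = d u := by rw [h1, h2]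
    omega
  · intro hchild
    refine ⟨p w, ofParent_adj_parent hd hw, fun u hu => ?_⟩
    rcases (ofParent_adj.1 hu).2 with ⟨-, rfl⟩ | ⟨hur, rfl⟩
    · rfl
    · exact absurd rfl (hchild u hur)

end Depth

theorem not_isLeafVert_of_adj {G : SimpleGraph V} {w a b : V} (ha : G.Adj w a) (hb : G.Adj w b)
    (hab : a ≠ b) : ¬ IsLeafVert G w := by
  rintro ⟨c, -, huniq⟩
  exact hab ((huniq a ha).trans (huniq b hb).symm)

theorem dist_eq_of_lipschitz_of_descent {G : SimpleGraph V} {v : V} (φ : V → ℕ) (hv : φ v = 0)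
    (hlip : ∀ a b, G.Adj a b → φ a ≤ φ b + 1)
    (hdesc : ∀ a, a ≠ v → ∃ b, G.Adj a b ∧ φ b + 1 = φ a) (u : V) :
    G.dist u v = φ u := by
  have walk : ∀ a, ∃ w : G.Walk a v, w.length = φ a := by
    intro a
    induction h : φ a using Nat.strong_induction_on generalizing a with
    | _ n ih =>
      by_cases ha : a = v
      · subst ha
        exact ⟨.nil, by simp [← h, hv]⟩
      · obtain ⟨b, hab, hb⟩ := hdesc a ha
        obtain ⟨w, hw⟩ := ih (φ b) (by omega) b rfl
        exact ⟨.cons hab w, by simp only [Walk.length_cons, hw]; omega⟩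
  have lower : ∀ {a b} (w : G.Walk a b), φ a ≤ φ b + w.length := by
    intro a b w
    induction w with
    | nil => simp
    | cons hab w ih =>
      have := hlip _ _ hab
      simp only [Walk.length_cons]
      omega
  obtain ⟨w, hw⟩ := walk u
  obtain ⟨w', hw'⟩ := w.reachable.exists_walk_length_eq_dist
  exact le_antisymm (hw ▸ dist_le w) (by simpa [hv, hw'] using lower w')

end SimpleGraph

/-- The spine `0, 1, …, spineLength` together with, for every `ℓ : ι`, a leg of `len ℓ` new
vertices forming a path that hangs from the spine vertex `pos ℓ`. -/
structure Caterpillar (ι : Type) where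
  spineLength : ℕ
  pos : ι → ℕ
  len : ι → ℕ
  pos_le : ∀ ℓ, pos ℓ ≤ spineLength
  len_pos : ∀ ℓ, 0 < len ℓ

namespace Caterpillar

variable {ι : Type} (C : Caterpillar ι)

/-- `.inr ⟨ℓ, h⟩` is the vertex of leg `ℓ` at distance `h + 1` from the spine. -/
abbrev Vertex : Type := Fin (C.spineLength + 1) ⊕ Σ ℓ, Fin (C.len ℓ)

def parent : C.Vertex → C.Vertex
  | .inl c => .inl ⟨c - 1, by omega⟩
  | .inr ⟨ℓ, ⟨0, _⟩⟩ => .inl ⟨C.pos ℓ, Nat.lt_succ_of_le (C.pos_le ℓ)⟩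
  | .inr ⟨ℓ, ⟨h + 1, hh⟩⟩ => .inr ⟨ℓ, ⟨h, by omega⟩⟩

def depth : C.Vertex → ℕ
  | .inl c => c
  | .inr ⟨ℓ, h⟩ => C.pos ℓ + h + 1

def graph : SimpleGraph C.Vertex := ofParent C.parent (.inl 0)

def tip (ℓ : ι) : C.Vertex := .inr ⟨ℓ, ⟨C.len ℓ - 1, by have := C.len_pos ℓ; omega⟩⟩

theorem depth_parent : ∀ v, v ≠ .inl 0 → C.depth (C.parent v) + 1 = C.depth v := by
  rintro (⟨c, hc⟩ | ⟨ℓ, ⟨_ | h, hh⟩⟩) hv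
  · have : c ≠ 0 := by rintro rfl; exact hv rfl
    simp only [parent, depth]
    omega
  all_goals rfl

theorem graph_adj_parent {v : C.Vertex} (hv : v ≠ .inl 0) : C.graph.Adj v (C.parent v) :=
  ofParent_adj_parent C.depth_parent hv

theorem graph_isTree [Finite ι] : C.graph.IsTree :=
  ofParent_isTree C.depth_parent

theorem tip_injective : Function.Injective C.tip := by
  intro ℓ ℓ' h
  simpa [tip] using congrArg (fun v => Sum.elim (fun _ => ℓ) Sigma.fst v) h

theorem parent_ne_tip (u : C.Vertex) (ℓ : ι) : C.parent u ≠ C.tip ℓ := by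
  rcases u with _ | ⟨ℓ', ⟨_ | h, hh⟩⟩
  · simp [parent, tip]
  · simp [parent, tip]
  · simp only [parent, tip, ne_eq, Sum.inr.injEq, Sigma.mk.inj_iff, not_and]
    rintro rfl
    simp only [heq_eq_eq, Fin.ext_iff]
    omega

theorem exists_parent_eq (hend : ∃ ℓ, C.pos ℓ = C.spineLength) {w : C.Vertex}
    (hw : w ≠ .inl 0) (ht : ∀ ℓ, C.tip ℓ ≠ w) : ∃ u, u ≠ .inl 0 ∧ C.parent u = w := by
  rcases w with ⟨c, hc⟩ | ⟨ℓ, ⟨h, hh⟩⟩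
  · have hc0 : c ≠ 0 := by rintro rfl; exact hw rfl
    by_cases hcn : c = C.spineLength
    · obtain ⟨ℓ, hℓ⟩ := hend
      exact ⟨.inr ⟨ℓ, ⟨0, C.len_pos ℓ⟩⟩, by simp, by simp [parent, hℓ, hcn]⟩
    · exact ⟨.inl ⟨c + 1, by omega⟩, by simp, rfl⟩
  · have : h + 1 < C.len ℓ := by
      by_contra hh'
      refine ht ℓ ?_
      simp only [tip, Sum.inr.injEq, Sigma.mk.injEq, heq_eq_eq, Fin.mk.injEq, true_and]
      omega
    exact ⟨.inr ⟨ℓ, ⟨h + 1, this⟩⟩, by simp, rfl⟩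

theorem isLeafVert_graph_iff (hn : 0 < C.spineLength) (h0 : ∃ ℓ, C.pos ℓ = 0)
    (hend : ∃ ℓ, C.pos ℓ = C.spineLength) (w : C.Vertex) :
    IsLeafVert C.graph w ↔ ∃ ℓ, C.tip ℓ = w := by
  by_cases hw : w = .inl 0
  · subst hw
    obtain ⟨ℓ, hℓ⟩ := h0
    have h1 : C.graph.Adj (.inl ⟨1, by omega⟩) (.inl 0) := C.graph_adj_parent (by simp)
    have h2 := C.graph_adj_parent (v := .inr ⟨ℓ, ⟨0, C.len_pos ℓ⟩⟩) (by simp)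
    have : C.parent (.inr ⟨ℓ, ⟨0, C.len_pos ℓ⟩⟩) = .inl 0 := by simp [parent, hℓ]
    rw [this] at h2
    simpa [tip] using not_isLeafVert_of_adj h1.symm h2.symm (by simp)
  rw [graph, isLeafVert_ofParent_iff C.depth_parent hw]
  constructor
  · intro hleaf
    by_contra! ht
    obtain ⟨u, hu, hpu⟩ := C.exists_parent_eq hend hw ht
    exact hleaf u hu hpu
  · rintro ⟨ℓ, rfl⟩ u -
    exact C.parent_ne_tip u ℓ

open Classical in
noncomputable def distToTip (ℓ' : ι) : C.Vertex → ℕ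
  | .inl c => Nat.dist c (C.pos ℓ') + C.len ℓ'
  | .inr ⟨ℓ, h⟩ =>
    if ℓ = ℓ' then C.len ℓ' - (h + 1) else h + 1 + Nat.dist (C.pos ℓ) (C.pos ℓ') + C.len ℓ'

theorem distToTip_parent (ℓ' : ι) {v : C.Vertex} (hv : v ≠ .inl 0) :
    C.distToTip ℓ' v ≤ C.distToTip ℓ' (C.parent v) + 1 ∧
      C.distToTip ℓ' (C.parent v) ≤ C.distToTip ℓ' v + 1 := by
  rcases v with ⟨c, hc⟩ | ⟨ℓ, ⟨_ | h, hh⟩⟩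
  · have : c ≠ 0 := by rintro rfl; exact hv rfl
    simp only [parent, distToTip, Nat.dist]
    omega
  all_goals
    simp only [parent, distToTip, Nat.dist]
    have := C.len_pos ℓ'
    split_ifs with hℓ <;> (try subst hℓ) <;> omega

theorem exists_adj_distToTip_succ (ℓ' : ι) {v : C.Vertex} (hv : v ≠ C.tip ℓ') :
    ∃ w, C.graph.Adj v w ∧ C.distToTip ℓ' w + 1 = C.distToTip ℓ' v := by
  have hlen := C.len_pos ℓ'
  have hpos := C.pos_le ℓ'
  rcases v with ⟨c, hc⟩ | ⟨ℓ, ⟨h, hh⟩⟩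
  · rcases lt_trichotomy c (C.pos ℓ') with hlt | rfl | hgt
    · refine ⟨.inl ⟨c + 1, by omega⟩, (C.graph_adj_parent (v := .inl ⟨c + 1, _⟩) ?_).symm, ?_⟩
      · simp
      · simp only [distToTip, Nat.dist]
        omega
    · refine ⟨.inr ⟨ℓ', ⟨0, hlen⟩⟩, (C.graph_adj_parent (v := .inr ⟨ℓ', ⟨0, hlen⟩⟩) ?_).symm, ?_⟩
      · simp
      · simp only [distToTip, ↓reduceIte, Nat.dist_self]
        omega
    · refine ⟨_, C.graph_adj_parent (v := .inl ⟨c, hc⟩) ?_, ?_⟩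
      · simp only [ne_eq, Sum.inl.injEq, Fin.mk_eq_zero]
        omega
      · simp only [parent, distToTip, Nat.dist]
        omega
  · by_cases hℓ : ℓ = ℓ'
    · subst hℓ
      have hh' : h + 1 < C.len ℓ := by
        by_contra hh'
        refine hv ?_
        simp only [tip, Sum.inr.injEq, Sigma.mk.injEq, heq_eq_eq, Fin.mk.injEq, true_and]
        omega
      refine ⟨.inr ⟨ℓ, ⟨h + 1, hh'⟩⟩, (C.graph_adj_parent (v := .inr ⟨ℓ, ⟨h + 1, hh'⟩⟩) ?_).symm,
        ?_⟩
      · simp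
      · simp only [distToTip, ↓reduceIte]
        omega
    · refine ⟨_, C.graph_adj_parent (v := .inr ⟨ℓ, ⟨h, hh⟩⟩) (by simp), ?_⟩
      rcases h with _ | h <;> simp only [distToTip, parent, hℓ, ↓reduceIte] <;> omega

theorem dist_tip_tip {ℓ ℓ' : ι} (h : ℓ ≠ ℓ') :
    C.graph.dist (C.tip ℓ) (C.tip ℓ') = C.len ℓ + Nat.dist (C.pos ℓ) (C.pos ℓ') + C.len ℓ' := by
  have := C.len_pos ℓ
  have := C.len_pos ℓ'
  rw [dist_eq_of_lipschitz_of_descent (C.distToTip ℓ') ?_ ?_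
    (fun _ => C.exists_adj_distToTip_succ ℓ')]
  · simp only [tip, distToTip, if_neg h]
    omega
  · simp only [tip, distToTip, ↓reduceIte]
    omega
  · intro a b hab
    rcases (ofParent_adj.1 hab).2 with ⟨ha, rfl⟩ | ⟨hb, rfl⟩
    exacts [(C.distToTip_parent ℓ' ha).1, (C.distToTip_parent ℓ' hb).2]

end Caterpillar

instance (q : ℕ) : Finite (IVert q) :=
  Finite.of_surjective (fun s : Option (Option (Fin q ⊕ Fin (q - 1))) =>
    match s with
    | none => .t
    | some none => .b
    | some (some (.inl i)) => .x i
    | some (some (.inr a)) => .y a)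
    (by rintro (_ | _ | i | a); exacts [⟨none, rfl⟩, ⟨some none, rfl⟩,
      ⟨some (some (.inl i)), rfl⟩, ⟨some (some (.inr a)), rfl⟩])

namespace IVert

variable {q : ℕ}

def legPos : IVert q → ℕ
  | .t => 0
  | .b => 2 * q
  | .x i => q + i
  | .y a => if a + 2 = q then 2 * q else q + a + 1

def legLen : IVert q → ℕ
  | .t => 1
  | .b => 2
  | .x i => if (i : ℕ) = 0 then q - 1 else q - i
  | .y a => if a + 2 = q then 2 * q - 1 else q + a + 2

def leafDist (u v : IVert q) : ℕ := u.legLen + Nat.dist u.legPos v.legPos + v.legLen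

theorem oddGadget_adj_iff {u v : IVert q} (huv : u ≠ v) :
    (oddGadget q).Adj u v ↔ leafDist u v ≤ 2 * q + 1 := by
  rcases u with _ | _ | ⟨i, hi⟩ | ⟨a, ha⟩ <;> rcases v with _ | _ | ⟨j, hj⟩ | ⟨c, hc⟩ <;>
    simp only [oddGadget, fromRel_adj, leafDist, legLen, legPos, Nat.dist, ne_eq, reduceCtorEq,
      x.injEq, y.injEq, Fin.mk.injEq, not_true_eq_false, not_false_eq_true, true_and, false_or,
      or_false, or_self, false_iff, true_iff, and_false] at huv ⊢ <;>
    (try split_ifs) <;> omega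

theorem isLeast_leafDist_t (hq : 2 ≤ q) :
    IsLeast {d | ∃ u, u ≠ .t ∧ leafDist u (.t : IVert q) = d} (2 * q) := by
  refine ⟨⟨.x ⟨0, by omega⟩, by simp, ?_⟩, ?_⟩
  · simp only [leafDist, legLen, legPos, Nat.dist, ↓reduceIte]
    omega
  rintro _ ⟨u, hu, rfl⟩
  rcases u with _ | _ | ⟨i, hi⟩ | ⟨a, ha⟩
  · exact absurd rfl hu
  all_goals simp only [leafDist, legLen, legPos, Nat.dist]; (try split_ifs) <;> omega

theorem isLeast_leafDist_b (hq : 2 ≤ q) :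
    IsLeast {d | ∃ u, u ≠ .b ∧ leafDist u (.b : IVert q) = d} 4 := by
  refine ⟨⟨.x ⟨q - 1, by omega⟩, by simp, ?_⟩, ?_⟩
  · simp only [leafDist, legLen, legPos, Nat.dist]
    split_ifs <;> omega
  rintro _ ⟨u, hu, rfl⟩
  rcases u with _ | _ | ⟨i, hi⟩ | ⟨a, ha⟩
  · simp only [leafDist, legLen, legPos, Nat.dist]
    omega
  · exact absurd rfl hu
  all_goals simp only [leafDist, legLen, legPos, Nat.dist]; split_ifs <;> omega

end IVert

def gadgetCaterpillar (q : ℕ) (hq : 2 ≤ q) : Caterpillar (IVert q) where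
  spineLength := 2 * q
  pos := IVert.legPos
  len := IVert.legLen
  pos_le := by
    rintro (_ | _ | ⟨i, hi⟩ | ⟨a, ha⟩) <;> simp only [IVert.legPos] <;> (try split_ifs) <;> omega
  len_pos := by
    rintro (_ | _ | ⟨i, hi⟩ | ⟨a, ha⟩) <;> simp only [IVert.legLen] <;> (try split_ifs) <;> omega

theorem gadgetCaterpillar_dist_tip {q : ℕ} (hq : 2 ≤ q) {u v : IVert q} (huv : u ≠ v) :
    (gadgetCaterpillar q hq).graph.dist ((gadgetCaterpillar q hq).tip u)
      ((gadgetCaterpillar q hq).tip v) = IVert.leafDist u v :=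
  (gadgetCaterpillar q hq).dist_tip_tip huv

theorem isLeafRoot_gadgetCaterpillar {q : ℕ} (hq : 2 ≤ q) :
    IsLeafRoot (oddGadget q) (2 * q + 1) (gadgetCaterpillar q hq).graph
      (gadgetCaterpillar q hq).tip := by
  refine ⟨inferInstance, Caterpillar.graph_isTree _, Caterpillar.tip_injective _, fun w => ?_,
    fun u v huv => ?_⟩
  · exact ((gadgetCaterpillar q hq).isLeafVert_graph_iff (show 0 < 2 * q by omega) ⟨.t, rfl⟩
      ⟨.b, rfl⟩ w).symm
  · rw [gadgetCaterpillar_dist_tip hq huv]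
    exact IVert.oddGadget_adj_iff huv

theorem mval_gadgetCaterpillar {q : ℕ} (hq : 2 ≤ q) (v : IVert q) :
    mval (gadgetCaterpillar q hq).graph (gadgetCaterpillar q hq).tip v =
      sInf {d | ∃ u, u ≠ v ∧ IVert.leafDist u v = d} := by
  unfold mval
  congr 1
  ext d
  exact exists_congr fun u => and_congr_right fun huv => by rw [gadgetCaterpillar_dist_tip hq huv]

theorem odd_gadget_root_R (q : ℕ) (hq : 2 ≤ q) (k : ℕ) (hk : k = 2 * q + 1) :
    ∃ (W : Type) (R : SimpleGraph W) (f : IVert q → W),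
      IsLeafRoot (oddGadget q) k R f ∧
      mval R f IVert.t = k - 1 ∧ mval R f IVert.b = 4 := by
  subst hk
  refine ⟨_, _, _, isLeafRoot_gadgetCaterpillar hq, ?_, ?_⟩
  · rw [mval_gadgetCaterpillar, (IVert.isLeast_leafDist_t hq).csInf_eq]
    rfl
  · rw [mval_gadgetCaterpillar, (IVert.isLeast_leafDist_b hq).csInf_eq]
end
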